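/- arXiv:1502.04197 — 2 statements merged into one kernel-verified Lean document; each statement's English description precedes it below -/
import Mathlib

section
/- Let a>0, σ>1, ρ ∈ ℝ, and define the Lei-Lin-Gevrey norm ‖f‖_{Z^ρ_{a,σ}} = ∫_{ℝ³} |ξ|^ρ e^{a|ξ|^{1/σ}} |f̂(ξ)| dξ. If f and g are tempered distributions with ‖f‖_{Z^{-1}_{a,σ}}, ‖f‖_{Z^{1}_{a,σ}}, ‖g‖_{Z^{-1}_{a,σ}}, ‖g‖_{Z^{1}_{a,σ}} all finite, then ‖fg‖_{Z^{0}_{a,σ}} ≤ ‖f‖_{Z^{-1}_{a,σ}} ‖g‖_{Z^{1}_{a,σ}} + ‖f‖_{Z^{1}_{a,σ}} ‖g‖_{Z^{-1}_{a,σ}}. -/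
/-!
Since `1 / σ ≤ 1`, the map `t ↦ t ^ (1 / σ)` is subadditive on `[0, ∞)`, so the weight
`w ξ = exp (a * ‖ξ‖ ^ (1 / σ))` is submultiplicative: `w ξ ≤ w (ξ - η) * w η`. Multiplying by
`1 ≤ ‖ξ - η‖⁻¹ * ‖η‖ + ‖ξ - η‖ * ‖η‖⁻¹` (valid unless `η ∈ {0, ξ}`, a null set) bounds
`w ξ * ‖f (ξ - η)‖ * ‖g η‖` by a sum of two products `F (ξ - η) * G η`. Tonelli's theorem and the
translation invariance of Lebesgue measure turn the double integral of each such product into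
the product of the integrals of `F` and `G` (Young's inequality in `L¹`).
-/

open MeasureTheory Real
open scoped ENNReal

section Weight

variable {E : Type*} [SeminormedAddCommGroup E] {a p : ℝ}

theorem exp_mul_norm_rpow_add_le (ha : 0 ≤ a) (hp₀ : 0 ≤ p) (hp₁ : p ≤ 1) (x y : E) :
    exp (a * ‖x + y‖ ^ p) ≤ exp (a * ‖x‖ ^ p) * exp (a * ‖y‖ ^ p) := by
  rw [← exp_add, ← mul_add]
  gcongr
  calc ‖x + y‖ ^ p ≤ (‖x‖ + ‖y‖) ^ p := by gcongr; exact norm_add_le x y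
    _ ≤ ‖x‖ ^ p + ‖y‖ ^ p := rpow_add_le_add_rpow (norm_nonneg x) (norm_nonneg y) hp₀ hp₁

theorem two_le_inv_mul_add_mul_inv {s t : ℝ} (hs : 0 < s) (ht : 0 < t) :
    2 ≤ s⁻¹ * t + s * t⁻¹ := by
  rw [← div_eq_inv_mul, ← div_eq_mul_inv, div_add_div _ _ hs.ne' ht.ne',
    le_div_iff₀ (by positivity)]
  nlinarith [sq_nonneg (s - t)]

theorem exp_mul_norm_rpow_add_le_split (ha : 0 ≤ a) (hp₀ : 0 ≤ p) (hp₁ : p ≤ 1) {x y : E}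
    (hx : 0 < ‖x‖) (hy : 0 < ‖y‖) :
    exp (a * ‖x + y‖ ^ p) ≤
      ‖x‖⁻¹ * exp (a * ‖x‖ ^ p) * (‖y‖ * exp (a * ‖y‖ ^ p)) +
        ‖x‖ * exp (a * ‖x‖ ^ p) * (‖y‖⁻¹ * exp (a * ‖y‖ ^ p)) :=
  calc exp (a * ‖x + y‖ ^ p) ≤ exp (a * ‖x‖ ^ p) * exp (a * ‖y‖ ^ p) * 1 := by
        rw [mul_one]; exact exp_mul_norm_rpow_add_le ha hp₀ hp₁ x y
    _ ≤ exp (a * ‖x‖ ^ p) * exp (a * ‖y‖ ^ p) * (‖x‖⁻¹ * ‖y‖ + ‖x‖ * ‖y‖⁻¹) := by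
        gcongr; exact one_le_two.trans (two_le_inv_mul_add_mul_inv hx hy)
    _ = _ := by ring

end Weight

theorem ofReal_mul_norm_integral_le {α E : Type*} [MeasurableSpace α] {μ : Measure α}
    [NormedAddCommGroup E] [NormedSpace ℝ E] {c : ℝ} (hc : 0 ≤ c) (f : α → E) :
    ENNReal.ofReal (c * ‖∫ y, f y ∂μ‖) ≤ ∫⁻ y, ENNReal.ofReal (c * ‖f y‖) ∂μ :=
  calc ENNReal.ofReal (c * ‖∫ y, f y ∂μ‖) = ENNReal.ofReal c * ‖∫ y, f y ∂μ‖ₑ := by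
        rw [ENNReal.ofReal_mul hc, ofReal_norm]
    _ ≤ ENNReal.ofReal c * ∫⁻ y, ‖f y‖ₑ ∂μ := by gcongr; exact enorm_integral_le_lintegral_enorm _
    _ = ∫⁻ y, ENNReal.ofReal (c * ‖f y‖) ∂μ := by
        rw [← lintegral_const_mul' _ _ ENNReal.ofReal_ne_top]
        simp only [ENNReal.ofReal_mul hc, ofReal_norm]

section Convolution

variable {G : Type*} [AddGroup G] [MeasurableSpace G] [MeasurableAdd₂ G] [MeasurableNeg G]
  {μ : Measure G} [SFinite μ] [μ.IsAddRightInvariant]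

theorem AEMeasurable.comp_sub_mul_comp_snd {F H : G → ℝ≥0∞} (hF : AEMeasurable F μ)
    (hH : AEMeasurable H μ) :
    AEMeasurable (fun z : G × G => F (z.1 - z.2) * H z.2) (μ.prod μ) :=
  (hF.comp_quasiMeasurePreserving (quasiMeasurePreserving_sub_of_right_invariant μ μ)).mul
    hH.comp_snd

theorem lintegral_lintegral_sub_mul {F H : G → ℝ≥0∞} (hF : AEMeasurable F μ)
    (hH : AEMeasurable H μ) :
    ∫⁻ x, ∫⁻ y, F (x - y) * H y ∂μ ∂μ = (∫⁻ x, F x ∂μ) * ∫⁻ y, H y ∂μ := by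
  rw [lintegral_lintegral_swap (hF.comp_sub_mul_comp_snd hH), ← lintegral_const_mul'' _ hH]
  refine lintegral_congr fun y => ?_
  have hFy : AEMeasurable (fun x => F (x - y)) μ :=
    hF.comp_quasiMeasurePreserving (measurePreserving_sub_right μ y).quasiMeasurePreserving
  rw [lintegral_mul_const'' _ hFy, lintegral_sub_right_eq_self]

theorem integral_mul_norm_integral_le {E : Type*} [NormedAddCommGroup E] [NormedSpace ℝ E]
    {w : G → ℝ} {k : G → G → E} {p q r s : G → ℝ}
    (hp : Integrable p μ) (hq : Integrable q μ) (hr : Integrable r μ) (hs : Integrable s μ)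
    (hw₀ : 0 ≤ w) (hp₀ : 0 ≤ p) (hq₀ : 0 ≤ q) (hr₀ : 0 ≤ r) (hs₀ : 0 ≤ s)
    (hk : ∀ x, ∀ᵐ y ∂μ, w x * ‖k x y‖ ≤ p (x - y) * q y + r (x - y) * s y) :
    ∫ x, w x * ‖∫ y, k x y ∂μ‖ ∂μ ≤
      (∫ x, p x ∂μ) * (∫ x, q x ∂μ) + (∫ x, r x ∂μ) * ∫ x, s x ∂μ := by
  have hP := integral_nonneg (μ := μ) hp₀
  have hQ := integral_nonneg (μ := μ) hq₀
  have hR := integral_nonneg (μ := μ) hr₀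
  have hS := integral_nonneg (μ := μ) hs₀
  have hpq := hp.aemeasurable.ennreal_ofReal.comp_sub_mul_comp_snd
    hq.aemeasurable.ennreal_ofReal
  have hrs := hr.aemeasurable.ennreal_ofReal.comp_sub_mul_comp_snd
    hs.aemeasurable.ennreal_ofReal
  have hpoint : ∀ x, ENNReal.ofReal ‖w x * ‖∫ y, k x y ∂μ‖‖ ≤
      ∫⁻ y, ENNReal.ofReal (p (x - y)) * ENNReal.ofReal (q y) +
        ENNReal.ofReal (r (x - y)) * ENNReal.ofReal (s y) ∂μ := fun x => by
    rw [Real.norm_of_nonneg (mul_nonneg (hw₀ x) (norm_nonneg _))]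
    refine (ofReal_mul_norm_integral_le (hw₀ x) _).trans <| lintegral_mono_ae <|
      (hk x).mono fun y hy => ?_
    rw [← ENNReal.ofReal_mul (hp₀ _), ← ENNReal.ofReal_mul (hr₀ _),
      ← ENNReal.ofReal_add (mul_nonneg (hp₀ _) (hq₀ _)) (mul_nonneg (hr₀ _) (hs₀ _))]
    exact ENNReal.ofReal_le_ofReal hy
  refine (le_norm_self _).trans <| (norm_integral_le_lintegral_norm _).trans <|
    ENNReal.toReal_le_of_le_ofReal (by positivity) <| (lintegral_mono hpoint).trans_eq ?_
  calc ∫⁻ x, ∫⁻ y, ENNReal.ofReal (p (x - y)) * ENNReal.ofReal (q y) +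
        ENNReal.ofReal (r (x - y)) * ENNReal.ofReal (s y) ∂μ ∂μ
      = ∫⁻ z, ENNReal.ofReal (p (z.1 - z.2)) * ENNReal.ofReal (q z.2) +
          ENNReal.ofReal (r (z.1 - z.2)) * ENNReal.ofReal (s z.2) ∂μ.prod μ :=
        (lintegral_prod _ (hpq.add hrs)).symm
    _ = (∫⁻ x, ENNReal.ofReal (p x) ∂μ) * (∫⁻ x, ENNReal.ofReal (q x) ∂μ) +
          (∫⁻ x, ENNReal.ofReal (r x) ∂μ) * ∫⁻ x, ENNReal.ofReal (s x) ∂μ := by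
        rw [lintegral_add_left' hpq, lintegral_prod _ hpq, lintegral_prod _ hrs,
          lintegral_lintegral_sub_mul hp.aemeasurable.ennreal_ofReal
            hq.aemeasurable.ennreal_ofReal,
          lintegral_lintegral_sub_mul hr.aemeasurable.ennreal_ofReal
            hs.aemeasurable.ennreal_ofReal]
    _ = _ := by
        rw [ENNReal.ofReal_add (by positivity) (by positivity), ENNReal.ofReal_mul hP,
          ENNReal.ofReal_mul hR, ofReal_integral_eq_lintegral_ofReal hp (ae_of_all _ hp₀),
          ofReal_integral_eq_lintegral_ofReal hq (ae_of_all _ hq₀),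
          ofReal_integral_eq_lintegral_ofReal hr (ae_of_all _ hr₀),
          ofReal_integral_eq_lintegral_ofReal hs (ae_of_all _ hs₀)]

end Convolution

theorem gevrey_product_law_general (a σ : ℝ) (ha : 0 < a) (hσ : 1 < σ)
    (f g : EuclideanSpace ℝ (Fin 3) → ℂ)
    (hf1 : Integrable fun ξ => ‖ξ‖⁻¹ * Real.exp (a * ‖ξ‖ ^ (1 / σ)) * ‖f ξ‖)
    (hf2 : Integrable fun ξ => ‖ξ‖ * Real.exp (a * ‖ξ‖ ^ (1 / σ)) * ‖f ξ‖)
    (hg1 : Integrable fun ξ => ‖ξ‖⁻¹ * Real.exp (a * ‖ξ‖ ^ (1 / σ)) * ‖g ξ‖)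
    (hg2 : Integrable fun ξ => ‖ξ‖ * Real.exp (a * ‖ξ‖ ^ (1 / σ)) * ‖g ξ‖) :
    ∫ ξ, Real.exp (a * ‖ξ‖ ^ (1 / σ)) * ‖∫ η, f (ξ - η) * g η‖ ≤
      (∫ ξ, ‖ξ‖⁻¹ * Real.exp (a * ‖ξ‖ ^ (1 / σ)) * ‖f ξ‖) *
        (∫ ξ, ‖ξ‖ * Real.exp (a * ‖ξ‖ ^ (1 / σ)) * ‖g ξ‖) +
      (∫ ξ, ‖ξ‖ * Real.exp (a * ‖ξ‖ ^ (1 / σ)) * ‖f ξ‖) *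
        (∫ ξ, ‖ξ‖⁻¹ * Real.exp (a * ‖ξ‖ ^ (1 / σ)) * ‖g ξ‖) := by
  have hp₀ : 0 ≤ 1 / σ := by positivity
  have hp₁ : 1 / σ ≤ 1 := (div_le_one (by positivity)).2 hσ.le
  refine integral_mul_norm_integral_le hf1 hg2 hf2 hg1 (fun _ => by positivity)
    (fun _ => by positivity) (fun _ => by positivity) (fun _ => by positivity)
    (fun _ => by positivity) fun ξ => ?_
  filter_upwards [volume.ae_ne 0, volume.ae_ne ξ] with η hη hηξ
  have hsplit := exp_mul_norm_rpow_add_le_split ha.le hp₀ hp₁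
    (norm_pos_iff.2 (sub_ne_zero.2 hηξ.symm)) (norm_pos_iff.2 hη)
  rw [sub_add_cancel] at hsplit
  rw [norm_mul]
  refine (mul_le_mul_of_nonneg_right hsplit (by positivity)).trans_eq ?_
  ring

/-- Product law in Lei-Lin-Gevrey spaces, stated on the Fourier side:
`f` and `g` stand for the Fourier transforms `f̂`, `ĝ`, and the Fourier
transform of the product is (up to normalization) the convolution `f * g`. -/
theorem gevrey_product_law (a σ : ℝ) (ha : 0 < a) (hσ : 1 < σ)
    (f g : EuclideanSpace ℝ (Fin 3) → ℂ) (hfm : Measurable f) (hgm : Measurable g)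
    (hf1 : Integrable fun ξ => ‖ξ‖⁻¹ * Real.exp (a * ‖ξ‖ ^ (1 / σ)) * ‖f ξ‖)
    (hf2 : Integrable fun ξ => ‖ξ‖ * Real.exp (a * ‖ξ‖ ^ (1 / σ)) * ‖f ξ‖)
    (hg1 : Integrable fun ξ => ‖ξ‖⁻¹ * Real.exp (a * ‖ξ‖ ^ (1 / σ)) * ‖g ξ‖)
    (hg2 : Integrable fun ξ => ‖ξ‖ * Real.exp (a * ‖ξ‖ ^ (1 / σ)) * ‖g ξ‖) :
    ∫ ξ, Real.exp (a * ‖ξ‖ ^ (1 / σ)) * ‖∫ η, f (ξ - η) * g η‖ ≤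
      (∫ ξ, ‖ξ‖⁻¹ * Real.exp (a * ‖ξ‖ ^ (1 / σ)) * ‖f ξ‖) *
        (∫ ξ, ‖ξ‖ * Real.exp (a * ‖ξ‖ ^ (1 / σ)) * ‖g ξ‖) +
      (∫ ξ, ‖ξ‖ * Real.exp (a * ‖ξ‖ ^ (1 / σ)) * ‖f ξ‖) *
        (∫ ξ, ‖ξ‖⁻¹ * Real.exp (a * ‖ξ‖ ^ (1 / σ)) * ‖g ξ‖) :=
  gevrey_product_law_general a σ ha hσ f g hf1 hf2 hg1 hg2
end

section
/- Let a>0, σ>1. There exists c = c_{a,σ} such that for any divergence-free vector field u, ‖u ⊗ u‖_{Z^{0}_{a,σ}} ≤ c ‖u‖_{Z^{-1}_{a/√σ,σ}} ‖u‖_{Z^{-1}_{a,σ}}^{1/2} ‖Δu‖_{Z^{-1}_{a,σ}}^{1/2}. -/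
/-!
The function `u` of the statement is the Fourier transform `û`, and `|(u ⊗ u)^|` is dominated by
the convolution `|û| ⋆ |û|`. Since `1/σ < 1`, `(p + q)^(1/σ) ≤ p^(1/σ)/σ + q^(1/σ)` for `p ≤ q`,
so at `ξ = (ξ - η) + η` the weight `e^(a|ξ|^(1/σ))` splits into a product in which the smaller
frequency only carries the weaker weight `e^((a/σ)|·|^(1/σ))`. Tonelli and translation invariance
then give `‖u ⊗ u‖_{Z^0_a} ≤ 2 ‖u‖_{Z^0_{a/σ}} ‖u‖_{Z^0_a}`. As `a/σ < a/√σ`, the surplus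
exponential absorbs a factor `|ξ|`, so `Z^0_{a/σ} ≲ Z^{-1}_{a/√σ}`, and Hölder's inequality
interpolates `Z^0_a` between `Z^{-1}_a` and `Z^1_a`.
-/

open MeasureTheory Real
open scoped ENNReal

lemma add_rpow_le_mul_rpow_add_rpow {s p q : ℝ} (hs0 : 0 < s) (hs1 : s ≤ 1) (hp : 0 ≤ p)
    (hpq : p ≤ q) : (p + q) ^ s ≤ s * p ^ s + q ^ s := by
  rcases (hp.trans hpq).eq_or_lt with rfl | hq
  · simp [le_antisymm hpq hp, zero_rpow hs0.ne']
  have ht0 : 0 ≤ p / q := div_nonneg hp hq.le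
  have hbernoulli : (1 + p / q) ^ s ≤ 1 + s * (p / q) ^ s :=
    calc (1 + p / q) ^ s ≤ 1 + s * (p / q) :=
          rpow_one_add_le_one_add_mul_self (by linarith) hs0.le hs1
      _ ≤ 1 + s * (p / q) ^ s := by
          gcongr
          exact self_le_rpow_of_le_one ht0 ((div_le_one hq).2 hpq) hs1
  calc (p + q) ^ s = q ^ s * (1 + p / q) ^ s := by
        rw [← mul_rpow hq.le (by positivity), mul_one_add, mul_div_cancel₀ _ hq.ne', add_comm]
    _ ≤ q ^ s * (1 + s * (p / q) ^ s) := by gcongr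
    _ = s * p ^ s + q ^ s := by
        rw [mul_one_add, mul_left_comm, ← mul_rpow hq.le ht0, mul_div_cancel₀ _ hq.ne', add_comm]

lemma exp_mul_rpow_le_add {a σ p q r : ℝ} (ha : 0 ≤ a) (hσ : 1 ≤ σ) (hp : 0 ≤ p) (hq : 0 ≤ q)
    (hr : 0 ≤ r) (hrpq : r ≤ p + q) :
    exp (a * r ^ (1 / σ)) ≤
      exp (a / σ * p ^ (1 / σ)) * exp (a * q ^ (1 / σ)) +
        exp (a * p ^ (1 / σ)) * exp (a / σ * q ^ (1 / σ)) := by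
  have hs0 : 0 < 1 / σ := by positivity
  have hs1 : 1 / σ ≤ 1 := (div_le_one (by positivity)).2 hσ
  have key : ∀ p q, 0 ≤ p → p ≤ q → r ≤ p + q →
      exp (a * r ^ (1 / σ)) ≤ exp (a / σ * p ^ (1 / σ)) * exp (a * q ^ (1 / σ)) := by
    intro p q hp hpq hrpq
    rw [← exp_add, exp_le_exp]
    calc a * r ^ (1 / σ) ≤ a * (1 / σ * p ^ (1 / σ) + q ^ (1 / σ)) := by
          gcongr
          exact (rpow_le_rpow hr hrpq hs0.le).trans (add_rpow_le_mul_rpow_add_rpow hs0 hs1 hp hpq)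
      _ = a / σ * p ^ (1 / σ) + a * q ^ (1 / σ) := by ring
  rcases le_total p q with hpq | hqp
  · exact (key p q hp hpq hrpq).trans (le_add_of_nonneg_right (by positivity))
  · have hsplit := key q p hq hqp (by linarith)
    rw [mul_comm (exp (a / σ * q ^ (1 / σ)))] at hsplit
    exact hsplit.trans (le_add_of_nonneg_left (by positivity))

lemma exists_rpow_le_mul_exp {k b : ℝ} (hk : 0 ≤ k) (hb : 0 < b) :
    ∃ c > 0, ∀ x, 0 ≤ x → x ^ k ≤ c * exp (b * x) := by
  obtain ⟨c, hc⟩ := (isLittleO_rpow_exp_pos_mul_atTop k hb).isBigO.bound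
  obtain ⟨R, hR⟩ := Filter.eventually_atTop.1 hc
  set C := max (max c (R ^ k)) 1
  have hcC : c ≤ C := (le_max_left _ _).trans (le_max_left _ _)
  have hRC : R ^ k ≤ C := (le_max_right _ _).trans (le_max_left _ _)
  refine ⟨C, by positivity, fun x hx => ?_⟩
  rcases le_total R x with hRx | hxR
  · have hlarge := hR x hRx
    rw [norm_of_nonneg (by positivity), norm_of_nonneg (exp_pos _).le] at hlarge
    exact hlarge.trans (by gcongr)
  · calc x ^ k ≤ R ^ k := rpow_le_rpow hx hxR hk
      _ ≤ C * exp (b * x) :=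
          hRC.trans (le_mul_of_one_le_right (by positivity) (one_le_exp (by positivity)))

lemma exists_rpow_mul_exp_le_mul {ρ ρ' b b' σ : ℝ} (hρ : ρ' ≤ ρ) (hb : b < b') (hσ : 0 < σ) :
    ∃ c > 0, ∀ t, 0 < t →
      t ^ ρ * exp (b * t ^ (1 / σ)) ≤ c * (t ^ ρ' * exp (b' * t ^ (1 / σ))) := by
  obtain ⟨c, hc, hgrowth⟩ :=
    exists_rpow_le_mul_exp (mul_nonneg (sub_nonneg.2 hρ) hσ.le) (sub_pos.2 hb)
  refine ⟨c, hc, fun t ht => ?_⟩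
  have hpow : t ^ (ρ - ρ') ≤ c * exp ((b' - b) * t ^ (1 / σ)) := by
    have := hgrowth (t ^ (1 / σ)) (by positivity)
    rwa [← rpow_mul ht.le, show 1 / σ * ((ρ - ρ') * σ) = ρ - ρ' by field_simp] at this
  calc t ^ ρ * exp (b * t ^ (1 / σ))
      = t ^ (ρ - ρ') * (t ^ ρ' * exp (b * t ^ (1 / σ))) := by
        rw [← mul_assoc, ← rpow_add ht, sub_add_cancel]
    _ ≤ c * exp ((b' - b) * t ^ (1 / σ)) * (t ^ ρ' * exp (b * t ^ (1 / σ))) := by gcongr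
    _ = c * (t ^ ρ' * exp (b' * t ^ (1 / σ))) := by
        rw [mul_left_comm, mul_assoc, ← exp_add, ← add_mul, sub_add_cancel]
        ring

section Convolution

variable {G : Type*} [AddGroup G] [MeasurableSpace G] [MeasurableAdd₂ G] [MeasurableNeg G]
  {μ : Measure G} [μ.IsAddLeftInvariant] [SFinite μ]

lemma lintegral_lconvolution {f g : G → ℝ≥0∞} (hf : AEMeasurable f μ) (hg : AEMeasurable g μ) :
    ∫⁻ x, (f ⋆ₗ[μ] g) x ∂μ = (∫⁻ x, f x ∂μ) * ∫⁻ x, g x ∂μ := by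
  simp only [lconvolution_def]
  rw [lintegral_lintegral_swap (by fun_prop), ← lintegral_mul_const'' _ hf]
  refine lintegral_congr fun y => ?_
  have htranslate : AEMeasurable (fun x => g (-y + x)) μ :=
    hg.comp_quasiMeasurePreserving (measurePreserving_add_left μ (-y)).quasiMeasurePreserving
  rw [lintegral_const_mul'' _ htranslate, lintegral_add_left_eq_self (μ := μ) g (-y)]

end Convolution

section GevreyNorm

variable {E : Type*} [NormedAddCommGroup E] [MeasurableSpace E] {μ : Measure E}

/-- `‖f‖_{Z^ρ_{b,σ}}` on the Fourier side, where `g` stands for `|f̂|`. -/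
noncomputable def gevreyNorm (μ : Measure E) (ρ b σ : ℝ) (g : E → ℝ≥0∞) : ℝ≥0∞ :=
  ∫⁻ ξ, ENNReal.ofReal (‖ξ‖ ^ ρ * exp (b * ‖ξ‖ ^ (1 / σ))) * g ξ ∂μ

lemma exists_gevreyNorm_le_mul_gevreyNorm [NullSingletonClass μ] {ρ ρ' b b' σ : ℝ}
    (hρ : ρ' ≤ ρ) (hb : b < b') (hσ : 0 < σ) :
    ∃ c > 0, ∀ g, gevreyNorm μ ρ b σ g ≤ ENNReal.ofReal c * gevreyNorm μ ρ' b' σ g := by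
  obtain ⟨c, hc, hweight⟩ := exists_rpow_mul_exp_le_mul hρ hb hσ
  refine ⟨c, hc, fun g => ?_⟩
  rw [gevreyNorm, gevreyNorm, ← lintegral_const_mul' _ _ ENNReal.ofReal_ne_top]
  refine lintegral_mono_ae ?_
  filter_upwards [Measure.ae_ne μ 0] with ξ hξ
  rw [← mul_assoc, ← ENNReal.ofReal_mul hc.le]
  gcongr ENNReal.ofReal ?_ * _
  exact hweight ‖ξ‖ (norm_pos_iff.2 hξ)

lemma gevreyNorm_le_rpow_mul_rpow [OpensMeasurableSpace E] [NullSingletonClass μ]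
    {g : E → ℝ≥0∞} (hg : AEMeasurable g μ) {θ : ℝ} (hθ₀ : 0 ≤ θ) (hθ₁ : θ ≤ 1)
    (ρ₁ ρ₂ b σ : ℝ) :
    gevreyNorm μ (θ * ρ₁ + (1 - θ) * ρ₂) b σ g ≤
      gevreyNorm μ ρ₁ b σ g ^ θ * gevreyNorm μ ρ₂ b σ g ^ (1 - θ) := by
  have hweight : ∀ {t w : ℝ}, 0 < t → 0 ≤ w →
      t ^ (θ * ρ₁ + (1 - θ) * ρ₂) * w = (t ^ ρ₁ * w) ^ θ * (t ^ ρ₂ * w) ^ (1 - θ) := by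
    intro t w ht hw
    rw [mul_rpow (by positivity) hw, mul_rpow (by positivity) hw, ← rpow_mul ht.le,
      ← rpow_mul ht.le, mul_mul_mul_comm, ← rpow_add ht, ← rpow_add' hw (by simp), add_sub_cancel,
      rpow_one, mul_comm ρ₁, mul_comm ρ₂]
  have hmeas : ∀ ρ : ℝ, AEMeasurable
      (fun ξ => ENNReal.ofReal (‖ξ‖ ^ ρ * exp (b * ‖ξ‖ ^ (1 / σ))) * g ξ) μ := by
    intro ρ; fun_prop
  calc gevreyNorm μ (θ * ρ₁ + (1 - θ) * ρ₂) b σ g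
      = ∫⁻ ξ, (ENNReal.ofReal (‖ξ‖ ^ ρ₁ * exp (b * ‖ξ‖ ^ (1 / σ))) * g ξ) ^ θ *
          (ENNReal.ofReal (‖ξ‖ ^ ρ₂ * exp (b * ‖ξ‖ ^ (1 / σ))) * g ξ) ^ (1 - θ) ∂μ := by
        refine lintegral_congr_ae ?_
        filter_upwards [Measure.ae_ne μ 0] with ξ hξ
        rw [ENNReal.mul_rpow_of_nonneg _ _ hθ₀, ENNReal.mul_rpow_of_nonneg _ _ (by linarith),
          mul_mul_mul_comm, ← ENNReal.rpow_add_of_nonneg _ _ hθ₀ (by linarith), add_sub_cancel,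
          ENNReal.rpow_one, ENNReal.ofReal_rpow_of_nonneg (by positivity) hθ₀,
          ENNReal.ofReal_rpow_of_nonneg (by positivity) (by linarith),
          ← ENNReal.ofReal_mul (by positivity), ← hweight (norm_pos_iff.2 hξ) (exp_pos _).le]
    _ ≤ gevreyNorm μ ρ₁ b σ g ^ θ * gevreyNorm μ ρ₂ b σ g ^ (1 - θ) :=
        ENNReal.lintegral_mul_norm_pow_le (hmeas ρ₁) (hmeas ρ₂) hθ₀ (by linarith)
          (add_sub_cancel θ 1)

lemma gevreyNorm_lconvolution_le [OpensMeasurableSpace E] [MeasurableAdd₂ E] [MeasurableNeg E]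
    [μ.IsAddLeftInvariant] [SFinite μ] {a σ : ℝ} (ha : 0 ≤ a) (hσ : 1 ≤ σ) {f g : E → ℝ≥0∞}
    (hf : AEMeasurable f μ) (hg : AEMeasurable g μ) :
    gevreyNorm μ 0 a σ (f ⋆ₗ[μ] g) ≤
      gevreyNorm μ 0 (a / σ) σ f * gevreyNorm μ 0 a σ g +
        gevreyNorm μ 0 a σ f * gevreyNorm μ 0 (a / σ) σ g := by
  set W : ℝ → E → ℝ≥0∞ := fun b ξ => ENNReal.ofReal (‖ξ‖ ^ (0 : ℝ) * exp (b * ‖ξ‖ ^ (1 / σ)))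
  have hsplit : ∀ x y, W a x * (f y * g (-y + x)) ≤
      W (a / σ) y * f y * (W a (-y + x) * g (-y + x)) +
        W a y * f y * (W (a / σ) (-y + x) * g (-y + x)) := by
    intro x y
    have hnorm : ‖x‖ ≤ ‖y‖ + ‖-y + x‖ := by simpa using norm_add_le y (-y + x)
    have hweight : W a x ≤ W (a / σ) y * W a (-y + x) + W a y * W (a / σ) (-y + x) := by
      simp only [W, rpow_zero, one_mul]
      rw [← ENNReal.ofReal_mul (exp_pos _).le, ← ENNReal.ofReal_mul (exp_pos _).le,
        ← ENNReal.ofReal_add (by positivity) (by positivity)]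
      exact ENNReal.ofReal_le_ofReal
        (exp_mul_rpow_le_add ha hσ (norm_nonneg _) (norm_nonneg _) (norm_nonneg _) hnorm)
    calc W a x * (f y * g (-y + x))
        ≤ (W (a / σ) y * W a (-y + x) + W a y * W (a / σ) (-y + x)) * (f y * g (-y + x)) := by
          gcongr
      _ = _ := by ring
  calc gevreyNorm μ 0 a σ (f ⋆ₗ[μ] g)
      = ∫⁻ x, ∫⁻ y, W a x * (f y * g (-y + x)) ∂μ ∂μ := by
        simp only [gevreyNorm, lconvolution_def, ← lintegral_const_mul' _ _ ENNReal.ofReal_ne_top]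
        rfl
    _ ≤ ∫⁻ x, ((fun ξ => W (a / σ) ξ * f ξ) ⋆ₗ[μ] (fun ξ => W a ξ * g ξ)) x +
          ((fun ξ => W a ξ * f ξ) ⋆ₗ[μ] (fun ξ => W (a / σ) ξ * g ξ)) x ∂μ := by
        refine lintegral_mono fun x => (lintegral_mono fun y => hsplit x y).trans_eq ?_
        exact lintegral_add_left' (by fun_prop) _
    _ = _ := by
        rw [lintegral_add_left' (aemeasurable_lconvolution (by fun_prop) (by fun_prop)),
          lintegral_lconvolution (by fun_prop) (by fun_prop),
          lintegral_lconvolution (by fun_prop) (by fun_prop)]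
        rfl

lemma ofReal_integral_exp_mul_integral_le_gevreyNorm {F : Type*} [NormedAddCommGroup F]
    (u v : E → F) (b σ : ℝ) :
    ENNReal.ofReal (∫ ξ, exp (b * ‖ξ‖ ^ (1 / σ)) * ∫ η, ‖u (ξ - η)‖ * ‖v η‖ ∂μ ∂μ) ≤
      gevreyNorm μ 0 b σ ((‖v ·‖ₑ) ⋆ₗ[μ] (‖u ·‖ₑ)) := by
  refine (ofReal_le_enorm _).trans ((enorm_integral_le_lintegral_enorm _).trans ?_)
  refine lintegral_mono fun ξ => ?_
  rw [enorm_mul, Real.enorm_of_nonneg (exp_pos _).le, rpow_zero, one_mul, lconvolution_def]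
  gcongr
  refine (enorm_integral_le_lintegral_enorm _).trans_eq (lintegral_congr fun η => ?_)
  rw [enorm_mul, enorm_norm, enorm_norm, mul_comm, neg_add_eq_sub]

lemma gevreyNorm_enorm_eq_ofReal_integral {F : Type*} [NormedAddCommGroup F] {v : E → F}
    {ρ b σ : ℝ} (hv : Integrable (fun ξ => ‖ξ‖ ^ ρ * exp (b * ‖ξ‖ ^ (1 / σ)) * ‖v ξ‖) μ) :
    gevreyNorm μ ρ b σ (‖v ·‖ₑ) =
      ENNReal.ofReal (∫ ξ, ‖ξ‖ ^ ρ * exp (b * ‖ξ‖ ^ (1 / σ)) * ‖v ξ‖ ∂μ) := by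
  rw [ofReal_integral_eq_lintegral_ofReal hv (ae_of_all _ fun ξ => by positivity)]
  refine lintegral_congr fun ξ => ?_
  dsimp only
  rw [← ofReal_norm, ← ENNReal.ofReal_mul (by positivity)]

theorem exists_gevreyNorm_lconvolution_self_le [OpensMeasurableSpace E] [MeasurableAdd₂ E]
    [MeasurableNeg E] [μ.IsAddLeftInvariant] [SFinite μ] [NullSingletonClass μ] {a σ : ℝ}
    (ha : 0 < a) (hσ : 1 < σ) :
    ∃ c > 0, ∀ g : E → ℝ≥0∞, AEMeasurable g μ →
      gevreyNorm μ 0 a σ (g ⋆ₗ[μ] g) ≤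
        ENNReal.ofReal c * gevreyNorm μ (-1) (a / √σ) σ g *
          gevreyNorm μ (-1) a σ g ^ (1 / 2 : ℝ) * gevreyNorm μ 1 a σ g ^ (1 / 2 : ℝ) := by
  have hσ₀ : 0 < σ := by linarith
  obtain ⟨c, hc, hcompare⟩ := exists_gevreyNorm_le_mul_gevreyNorm (μ := μ) (ρ := 0) (ρ' := -1)
    (by norm_num) (div_lt_div_of_pos_left ha (sqrt_pos.2 hσ₀) (sqrt_lt_self_iff.2 hσ)) hσ₀
  refine ⟨2 * c, by positivity, fun g hg => ?_⟩
  have hinterp : gevreyNorm μ 0 a σ g ≤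
      gevreyNorm μ (-1) a σ g ^ (1 / 2 : ℝ) * gevreyNorm μ 1 a σ g ^ (1 / 2 : ℝ) := by
    convert gevreyNorm_le_rpow_mul_rpow hg (θ := 1 / 2) (by norm_num) (by norm_num) (-1) 1 a σ
      using 3 <;> norm_num
  calc gevreyNorm μ 0 a σ (g ⋆ₗ[μ] g)
      ≤ gevreyNorm μ 0 (a / σ) σ g * gevreyNorm μ 0 a σ g +
          gevreyNorm μ 0 a σ g * gevreyNorm μ 0 (a / σ) σ g :=
        gevreyNorm_lconvolution_le ha.le hσ.le hg hg
    _ = 2 * gevreyNorm μ 0 (a / σ) σ g * gevreyNorm μ 0 a σ g := by ring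
    _ ≤ 2 * (ENNReal.ofReal c * gevreyNorm μ (-1) (a / √σ) σ g) *
          (gevreyNorm μ (-1) a σ g ^ (1 / 2 : ℝ) * gevreyNorm μ 1 a σ g ^ (1 / 2 : ℝ)) := by
        gcongr
        exact hcompare g
    _ = _ := by
        rw [ENNReal.ofReal_mul zero_le_two, ENNReal.ofReal_ofNat]
        ring

end GevreyNorm

/-- `‖u ⊗ u‖_{Z^0_{a,σ}} ≤ c ‖u‖_{Z^{-1}_{a/√σ,σ}} ‖u‖_{Z^{-1}_{a,σ}}^{1/2} ‖Δu‖_{Z^{-1}_{a,σ}}^{1/2}`,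
stated on the Fourier side: `u` stands for the Fourier transform `û` of the
divergence-free vector field, `|(u ⊗ u)^(ξ)|` is dominated by the convolution
`∫ η, ‖û(ξ-η)‖‖û(η)‖`, and `‖Δu‖_{Z^{-1}_{a,σ}} = ∫ |ξ| e^{a|ξ|^{1/σ}}|û| dξ`. -/
theorem tensor_product_gevrey_bound (a σ : ℝ) (ha : 0 < a) (hσ : 1 < σ) :
    ∃ c > 0, ∀ u : EuclideanSpace ℝ (Fin 3) → EuclideanSpace ℂ (Fin 3),
      AEStronglyMeasurable u (volume : Measure (EuclideanSpace ℝ (Fin 3))) →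
      (∀ ξ : EuclideanSpace ℝ (Fin 3), ∑ i, (ξ i : ℂ) * u ξ i = 0) →
      (Integrable fun ξ => ‖ξ‖⁻¹ * Real.exp ((a / Real.sqrt σ) * ‖ξ‖ ^ (1 / σ)) * ‖u ξ‖) →
      (Integrable fun ξ => ‖ξ‖⁻¹ * Real.exp (a * ‖ξ‖ ^ (1 / σ)) * ‖u ξ‖) →
      (Integrable fun ξ => ‖ξ‖ * Real.exp (a * ‖ξ‖ ^ (1 / σ)) * ‖u ξ‖) →
      ∫ ξ, Real.exp (a * ‖ξ‖ ^ (1 / σ)) * ∫ η, ‖u (ξ - η)‖ * ‖u η‖ ≤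
        c * (∫ ξ, ‖ξ‖⁻¹ * Real.exp ((a / Real.sqrt σ) * ‖ξ‖ ^ (1 / σ)) * ‖u ξ‖) *
          (∫ ξ, ‖ξ‖⁻¹ * Real.exp (a * ‖ξ‖ ^ (1 / σ)) * ‖u ξ‖) ^ ((1 : ℝ) / 2) *
          (∫ ξ, ‖ξ‖ * Real.exp (a * ‖ξ‖ ^ (1 / σ)) * ‖u ξ‖) ^ ((1 : ℝ) / 2) := by
  obtain ⟨c, hc, hbound⟩ := exists_gevreyNorm_lconvolution_self_le
    (μ := (volume : Measure (EuclideanSpace ℝ (Fin 3)))) ha hσ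
  refine ⟨c, hc, fun u hu _ hA hB hC => ?_⟩
  have hA' := gevreyNorm_enorm_eq_ofReal_integral (ρ := -1) (by simpa only [rpow_neg_one] using hA)
  have hB' := gevreyNorm_enorm_eq_ofReal_integral (ρ := -1) (by simpa only [rpow_neg_one] using hB)
  have hC' := gevreyNorm_enorm_eq_ofReal_integral (ρ := 1) (by simpa only [rpow_one] using hC)
  simp only [rpow_neg_one, rpow_one] at hA' hB' hC'
  have key := (ofReal_integral_exp_mul_integral_le_gevreyNorm u u a σ).trans (hbound _ hu.enorm)
  rw [hA', hB', hC', ENNReal.ofReal_rpow_of_nonneg (by positivity) (by norm_num),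
    ENNReal.ofReal_rpow_of_nonneg (by positivity) (by norm_num), ← ENNReal.ofReal_mul hc.le,
    ← ENNReal.ofReal_mul (by positivity), ← ENNReal.ofReal_mul (by positivity)] at key
  exact (ENNReal.ofReal_le_ofReal_iff (by positivity)).1 key
end
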